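/- arXiv:2502.19336 — 4 statements merged into one kernel-verified Lean document; each statement's English description precedes it below -/
import Mathlib

section
/- For a real 2k×2k symmetric matrix M with all entries of absolute value at most m_max, |Haf(M)| ≤ √2 · (2k·m_max/e)^k. If additionally all entries of M are at least m_min > 0, then Haf(M) ≥ √2 · e^{1/25 - 1/12} · (2k·m_min/e)^k. -/
/-!
Each of the `(2k)!` summands of the hafnian is a product of `k` entries, so it has absolute
value at most `m_max ^ k` and is at least `m_min ^ k`; hence
`|Haf(M)| ≤ (2k)! / (k! 2^k) · m_max^k` and `Haf(M) ≥ (2k)! / (k! 2^k) · m_min^k`. Writing `n! = s(n) √(2n) (n/e)^n` with the Stirling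
sequence `s`, this ratio equals `√2 (s(2k)/s(k)) (2k/e)^k`. Since `s` decreases on positive
integers, `s(2k)/s(k) ≤ 1`; Robbins' bound `log s(n) - log s(n+1) ≤ 1/(12n(n+1))` telescopes to
`log s(k) - log s(2k) ≤ 1/(24k) ≤ 1/24 < 1/12 - 1/25`.
-/

/-- The hafnian of an `n × n` real matrix (`0` when `n` is odd, `1` for the empty matrix):
`Haf(M) = (1/(k! 2^k)) ∑_{σ ∈ S_{2k}} ∏_{j=1}^k M_{σ(2j-1), σ(2j)}` for `n = 2k`. -/
noncomputable def hafnian {n : ℕ} (M : Matrix (Fin n) (Fin n) ℝ) : ℝ :=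
  if Even n then
    (1 / ((n / 2).factorial * 2 ^ (n / 2) : ℝ)) *
      ∑ σ : Equiv.Perm (Fin n), ∏ j : Fin (n / 2),
        M (σ ⟨2 * j.1, by have := j.2; omega⟩) (σ ⟨2 * j.1 + 1, by have := j.2; omega⟩)
  else 0

open Real Nat Stirling

noncomputable def hafnianSummand {n : ℕ} (M : Matrix (Fin n) (Fin n) ℝ)
    (σ : Equiv.Perm (Fin n)) : ℝ :=
  ∏ j : Fin (n / 2), M (σ ⟨2 * j.1, by have := j.2; omega⟩) (σ ⟨2 * j.1 + 1, by have := j.2; omega⟩)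

section Hafnian

variable {n : ℕ} {M : Matrix (Fin n) (Fin n) ℝ} {c : ℝ}

theorem hafnian_of_even (hn : Even n) :
    hafnian M = 1 / ((n / 2)! * 2 ^ (n / 2) : ℝ) * ∑ σ, hafnianSummand M σ := by
  rw [hafnian, if_pos hn]
  rfl

theorem abs_hafnianSummand_le (hM : ∀ i j, |M i j| ≤ c) (σ : Equiv.Perm (Fin n)) :
    |hafnianSummand M σ| ≤ c ^ (n / 2) := by
  rw [hafnianSummand, Finset.abs_prod]
  calc ∏ j : Fin (n / 2), |M _ _| ≤ ∏ _j : Fin (n / 2), c :=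
        Finset.prod_le_prod (fun _ _ ↦ abs_nonneg _) (fun _ _ ↦ hM _ _)
    _ = c ^ (n / 2) := by simp

theorem pow_le_hafnianSummand (hc : 0 ≤ c) (hM : ∀ i j, c ≤ M i j) (σ : Equiv.Perm (Fin n)) :
    c ^ (n / 2) ≤ hafnianSummand M σ := by
  calc c ^ (n / 2) = ∏ _j : Fin (n / 2), c := by simp
    _ ≤ hafnianSummand M σ := Finset.prod_le_prod (fun _ _ ↦ hc) (fun _ _ ↦ hM _ _)

theorem abs_hafnian_le (hn : Even n) (hM : ∀ i j, |M i j| ≤ c) :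
    |hafnian M| ≤ n ! / ((n / 2)! * 2 ^ (n / 2)) * c ^ (n / 2) := by
  have hsum : |∑ σ, hafnianSummand M σ| ≤ n ! * c ^ (n / 2) := by
    grw [Finset.abs_sum_le_sum_abs, Finset.sum_le_card_nsmul _ _ _
      (fun σ _ ↦ abs_hafnianSummand_le hM σ)]
    simp [Fintype.card_perm]
  rw [hafnian_of_even hn, abs_mul, abs_of_pos (by positivity)]
  grw [hsum]
  exact (by ring : _ = _).le

theorem le_hafnian (hn : Even n) (hc : 0 ≤ c) (hM : ∀ i j, c ≤ M i j) :
    n ! / ((n / 2)! * 2 ^ (n / 2)) * c ^ (n / 2) ≤ hafnian M := by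
  have hsum : n ! * c ^ (n / 2) ≤ ∑ σ, hafnianSummand M σ := by
    grw [← Finset.card_nsmul_le_sum _ _ _ (fun σ _ ↦ pow_le_hafnianSummand hc hM σ)]
    simp [Fintype.card_perm]
  rw [hafnian_of_even hn]
  grw [← hsum]
  exact (by ring : _ = _).le

end Hafnian

namespace Stirling

theorem stirlingSeq_pos {n : ℕ} (hn : n ≠ 0) : 0 < stirlingSeq n := by
  obtain ⟨n, rfl⟩ := Nat.exists_eq_succ_of_ne_zero hn
  exact stirlingSeq'_pos n

theorem stirlingSeq_le_of_le {m n : ℕ} (hm : m ≠ 0) (h : m ≤ n) :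
    stirlingSeq n ≤ stirlingSeq m := by
  obtain ⟨m, rfl⟩ := Nat.exists_eq_succ_of_ne_zero hm
  obtain ⟨n, rfl⟩ : ∃ n', n = n' + 1 := ⟨n - 1, by omega⟩
  exact stirlingSeq'_antitone (Nat.le_of_succ_le_succ h)

theorem log_stirlingSeq_sub_log_stirlingSeq_le {m n : ℕ} (hm : m ≠ 0) (h : m ≤ n) :
    log (stirlingSeq m) - log (stirlingSeq n) ≤ (1 / m - 1 / n) / 12 := by
  induction n, h using Nat.le_induction with
  | base => simp
  | succ n hmn ih =>
    have hn : (0 : ℝ) < n := by exact_mod_cast (Nat.pos_of_ne_zero hm).trans_le hmn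
    have robbins : 1 / (12 * (n : ℝ) * (n + 1)) = (1 / n - 1 / (n + 1)) / 12 := by
      field_simp
      ring
    have step := log_stirlingSeq_sdiff_le n
    rw [robbins] at step
    push_cast
    linarith

theorem exp_neg_inv_le_stirlingSeq_two_mul_div {k : ℕ} (hk : k ≠ 0) :
    exp (-(1 / (24 * k))) ≤ stirlingSeq (2 * k) / stirlingSeq k := by
  have hk' : (0 : ℝ) < k := by exact_mod_cast Nat.pos_of_ne_zero hk
  have hpos := stirlingSeq_pos hk
  have hpos₂ := stirlingSeq_pos (show 2 * k ≠ 0 by omega)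
  have hlog := log_stirlingSeq_sub_log_stirlingSeq_le hk (show k ≤ 2 * k by omega)
  have half : (1 / (k : ℝ) - 1 / ↑(2 * k)) / 12 = 1 / (24 * k) := by
    push_cast
    field_simp
    ring
  rw [half] at hlog
  rw [← exp_log (div_pos hpos₂ hpos), exp_le_exp, log_div hpos₂.ne' hpos.ne']
  linarith

end Stirling

theorem two_mul_factorial_div_eq_stirlingSeq {k : ℕ} (hk : k ≠ 0) :
    ((2 * k)! : ℝ) / (k ! * 2 ^ k) =
      √2 * (stirlingSeq (2 * k) / stirlingSeq k) * (2 * k / exp 1) ^ k := by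
  have hk' : (0 : ℝ) < k := by exact_mod_cast Nat.pos_of_ne_zero hk
  have factorial_eq (n : ℕ) (hn : (0 : ℝ) < n) :
      (n ! : ℝ) = stirlingSeq n * (√(2 * n) * (n / exp 1) ^ n) := by
    rw [stirlingSeq, div_mul_cancel₀]
    positivity
  rw [factorial_eq k hk', factorial_eq (2 * k) (by push_cast; positivity)]
  have hsqrt : √(2 * ((2 * k : ℕ) : ℝ)) = √2 * √(2 * k) := by
    push_cast
    exact sqrt_mul zero_le_two _
  have hpow : (((2 * k : ℕ) : ℝ) / exp 1) ^ (2 * k) =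
      2 ^ k * (k / exp 1) ^ k * (2 * k / exp 1) ^ k := by
    push_cast
    rw [two_mul k, pow_add, mul_div_assoc, mul_pow]
  rw [hsqrt, hpow]
  field_simp

theorem two_mul_factorial_div_le {k : ℕ} (hk : k ≠ 0) :
    ((2 * k)! : ℝ) / (k ! * 2 ^ k) ≤ √2 * (2 * k / exp 1) ^ k := by
  have hpos := stirlingSeq_pos hk
  rw [two_mul_factorial_div_eq_stirlingSeq hk]
  have hratio : stirlingSeq (2 * k) / stirlingSeq k ≤ 1 :=
    (div_le_one hpos).mpr (stirlingSeq_le_of_le hk (by omega))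
  grw [hratio, mul_one]

theorem exp_neg_inv_mul_le_two_mul_factorial_div {k : ℕ} (hk : k ≠ 0) :
    √2 * exp (-(1 / (24 * k))) * (2 * k / exp 1) ^ k ≤ ((2 * k)! : ℝ) / (k ! * 2 ^ k) := by
  rw [two_mul_factorial_div_eq_stirlingSeq hk]
  gcongr
  exact exp_neg_inv_le_stirlingSeq_two_mul_div hk

theorem hafnian_stirling_bounds_general (k : ℕ) (hk : 1 ≤ k)
    (M : Matrix (Fin (2 * k)) (Fin (2 * k)) ℝ)
    (mmax : ℝ) (hub : ∀ i j, |M i j| ≤ mmax) :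
    |hafnian M| ≤ Real.sqrt 2 * (2 * k * mmax / Real.exp 1) ^ k ∧
      ∀ mmin : ℝ, 0 < mmin → (∀ i j, mmin ≤ M i j) →
        Real.sqrt 2 * Real.exp (1 / 25 - 1 / 12) * (2 * k * mmin / Real.exp 1) ^ k
          ≤ hafnian M := by
  have hk₀ : k ≠ 0 := by omega
  have hhalf : 2 * k / 2 = k := by omega
  have hmax : 0 ≤ mmax := (abs_nonneg _).trans (hub ⟨0, by omega⟩ ⟨0, by omega⟩)
  have hexp : exp (1 / 25 - 1 / 12) ≤ exp (-(1 / (24 * k))) := by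
    have : (1 : ℝ) / (24 * k) ≤ 1 / 24 := by
      gcongr
      linarith [show (1 : ℝ) ≤ k by exact_mod_cast hk]
    gcongr
    linarith
  constructor
  · have h := abs_hafnian_le (even_two_mul k) hub
    rw [hhalf] at h
    grw [h, two_mul_factorial_div_le hk₀, mul_div_right_comm _ mmax, mul_pow]
    exact (by ring : _ = _).le
  · intro mmin hmin hlb
    have h := le_hafnian (even_two_mul k) hmin.le hlb
    rw [hhalf] at h
    grw [← h, ← exp_neg_inv_mul_le_two_mul_factorial_div hk₀, hexp, mul_div_right_comm _ mmin,
      mul_pow]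
    exact (by ring : _ = _).le

/-- For a real `2k × 2k` symmetric matrix `M` (with `k ≥ 1`) all of whose entries have
absolute value at most `m_max`, `|Haf(M)| ≤ √2 (2k m_max / e)^k`; and if moreover all
entries are at least `m_min > 0`, then `Haf(M) ≥ √2 e^{1/25 - 1/12} (2k m_min / e)^k`. -/
theorem hafnian_stirling_bounds (k : ℕ) (hk : 1 ≤ k)
    (M : Matrix (Fin (2 * k)) (Fin (2 * k)) ℝ) (hsym : M.IsSymm)
    (mmax : ℝ) (hub : ∀ i j, |M i j| ≤ mmax) :
    |hafnian M| ≤ Real.sqrt 2 * (2 * k * mmax / Real.exp 1) ^ k ∧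
      ∀ mmin : ℝ, 0 < mmin → (∀ i j, mmin ≤ M i j) →
        Real.sqrt 2 * Real.exp (1 / 25 - 1 / 12) * (2 * k * mmin / Real.exp 1) ^ k
          ≤ hafnian M :=
  hafnian_stirling_bounds_general k hk M mmax hub
end

section
/- Let X be a nonnegative real random variable with 0 < E[X] < ∞ and E[X²] < ∞. Then E[√X] ≥ √(E[X]) · (1 - Var(X)/(2·E[X]²)). -/
/-!
Normalise `Y = X / E[X]`, so that `E[Y] = 1` and `Var(Y) = Var(X) / E[X]²`. The parabola
`3/2 y - 1/2 y²` lies below `√y` (it touches it at `y = 1`), so integrating gives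
`E[√Y] ≥ 3/2 - 1/2 E[Y²] = 1 - Var(Y)/2`; multiply by `√E[X]`.
-/

open MeasureTheory ProbabilityTheory

namespace Real

/-- For `x < 0` the left side is negative while `√x = 0`. -/
theorem three_halves_mul_sub_half_sq_le_sqrt (x : ℝ) : 3 / 2 * x - 1 / 2 * x ^ 2 ≤ √x := by
  rcases le_or_gt 0 x with hx | hx
  · have hsq := sq_sqrt hx
    nlinarith [mul_nonneg (sqrt_nonneg x) (sq_nonneg (√x - 1)), sq_nonneg (√x + 1)]
  · nlinarith [sqrt_nonneg x]

theorem sqrt_le_one_add_abs (x : ℝ) : √x ≤ 1 + |x| := by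
  rcases le_or_gt 0 x with hx | hx
  · have hsq := sq_sqrt hx
    nlinarith [sq_nonneg (√x - 1), abs_of_nonneg hx]
  · rw [sqrt_eq_zero_of_nonpos hx.le]
    positivity

end Real

namespace MeasureTheory

variable {Ω : Type*} {m : MeasurableSpace Ω} {μ : Measure Ω}

theorem Integrable.sqrt [IsFiniteMeasure μ] {f : Ω → ℝ} (hf : Integrable f μ) :
    Integrable (fun ω => √(f ω)) μ := by
  refine ((integrable_const 1).add hf.abs).mono
    (Real.continuous_sqrt.comp_aestronglyMeasurable hf.aestronglyMeasurable) ?_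
  filter_upwards with ω
  rw [Real.norm_of_nonneg (Real.sqrt_nonneg _), Pi.add_apply, Real.norm_of_nonneg (by positivity)]
  exact Real.sqrt_le_one_add_abs _

end MeasureTheory

namespace ProbabilityTheory

variable {Ω : Type*} {m : MeasurableSpace Ω} {μ : Measure Ω}

theorem one_sub_variance_div_two_le_integral_sqrt [IsProbabilityMeasure μ] {Y : Ω → ℝ}
    (hY : MemLp Y 2 μ) (hmean : ∫ ω, Y ω ∂μ = 1) :
    1 - variance Y μ / 2 ≤ ∫ ω, √(Y ω) ∂μ := by
  have hint : Integrable Y μ := hY.integrable one_le_two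
  have hint_sq : Integrable (fun ω => Y ω ^ 2) μ := hY.integrable_sq
  have hparabola : ∫ ω, (3 / 2 * Y ω - 1 / 2 * Y ω ^ 2) ∂μ = 1 - variance Y μ / 2 := by
    rw [integral_sub (hint.const_mul _) (hint_sq.const_mul _), integral_const_mul,
      integral_const_mul, hmean, variance_eq_sub hY]
    simp only [Pi.pow_apply, hmean]
    ring
  calc 1 - variance Y μ / 2 = ∫ ω, (3 / 2 * Y ω - 1 / 2 * Y ω ^ 2) ∂μ := hparabola.symm
    _ ≤ ∫ ω, √(Y ω) ∂μ :=
      integral_mono ((hint.const_mul _).sub (hint_sq.const_mul _)) hint.sqrt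
        fun ω => Real.three_halves_mul_sub_half_sq_le_sqrt (Y ω)

end ProbabilityTheory

theorem integral_sqrt_ge_of_memLp_general {Ω : Type*} [MeasureSpace Ω]
    (hprob : IsProbabilityMeasure (ℙ : Measure Ω))
    (X : Ω → ℝ) (hL2 : MemLp X 2)
    (hmean : 0 < ∫ ω, X ω) :
    Real.sqrt (∫ ω, X ω) * (1 - variance X ℙ / (2 * (∫ ω, X ω) ^ 2))
      ≤ ∫ ω, Real.sqrt (X ω) := by
  set m := ∫ ω, X ω
  set Y := fun ω => m⁻¹ * X ω
  have hY_mean : ∫ ω, Y ω = 1 := by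
    rw [integral_const_mul, inv_mul_cancel₀ hmean.ne']
  have hY_var : variance Y ℙ = variance X ℙ / m ^ 2 := by
    rw [variance_const_mul, inv_pow, inv_mul_eq_div]
  have hsqrt_X (ω : Ω) : √(X ω) = √m * √(Y ω) := by
    rw [← Real.sqrt_mul hmean.le, mul_inv_cancel_left₀ hmean.ne']
  calc √m * (1 - variance X ℙ / (2 * m ^ 2)) = √m * (1 - variance Y ℙ / 2) := by
        rw [hY_var, div_div, mul_comm (m ^ 2)]
    _ ≤ √m * ∫ ω, √(Y ω) :=
        mul_le_mul_of_nonneg_left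
          (one_sub_variance_div_two_le_integral_sqrt (hL2.const_mul _) hY_mean) (Real.sqrt_nonneg m)
    _ = ∫ ω, √(X ω) := by simp only [hsqrt_X, integral_const_mul]

/-- Let `X` be a nonnegative real random variable with `0 < E[X] < ∞` and `E[X²] < ∞`
(i.e. `X ∈ L²`).  Then `E[√X] ≥ √(E[X]) (1 - Var(X)/(2 E[X]²))`. -/
theorem integral_sqrt_ge_of_memLp {Ω : Type*} [MeasureSpace Ω]
    (hprob : IsProbabilityMeasure (ℙ : Measure Ω))
    (X : Ω → ℝ) (hX : ∀ ω, 0 ≤ X ω) (hL2 : MemLp X 2)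
    (hmean : 0 < ∫ ω, X ω) :
    Real.sqrt (∫ ω, X ω) * (1 - variance X ℙ / (2 * (∫ ω, X ω) ^ 2))
      ≤ ∫ ω, Real.sqrt (X ω) :=
  integral_sqrt_ge_of_memLp_general hprob X hL2 hmean
end

section
/- Let S_n be a binomial random variable with parameters n (a positive integer) and p ∈ (0,1]. Then E[√(S_n)] ≥ √(np) − (1−p)/(2√(np)). -/
private lemma sqrt_lower_bound (m j : ℝ) (hm : 0 < m) (hj : 0 ≤ j) :
    Real.sqrt m + (j - m) / (2 * Real.sqrt m) - (m - j) ^ 2 / (2 * m * Real.sqrt m)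
      ≤ Real.sqrt j := by
  set s := Real.sqrt m with hs
  set t := Real.sqrt j with ht
  have hs0 : 0 < s := Real.sqrt_pos.mpr hm
  have ht0 : 0 ≤ t := Real.sqrt_nonneg j
  have hm2 : m = s ^ 2 := (Real.sq_sqrt hm.le).symm
  have hj2 : j = t ^ 2 := (Real.sq_sqrt hj).symm
  rw [hm2, hj2]
  have key : t - (s + (t^2 - s^2) / (2*s) - (s^2 - t^2)^2 / (2*s^2*s))
      = (t - s)^2 * (t^2 + 2*s*t) / (2*s^3) := by
    field_simp
    ring
  have h1 : 0 ≤ (t - s)^2 * (t^2 + 2*s*t) / (2*s^3) := by positivity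
  linarith [key ▸ h1]

/-- Let `S_n` be a binomial random variable with parameters `n ≥ 1` and `p ∈ (0,1]`.
Then `E[√(S_n)] = ∑_{j=0}^n √j C(n,j) p^j (1-p)^{n-j} ≥ √(np) - (1-p)/(2√(np))`. -/
theorem binomial_expectation_sqrt_ge (n : ℕ) (hn : 1 ≤ n) (p : ℝ) (hp0 : 0 < p) (hp1 : p ≤ 1) :
    Real.sqrt (n * p) - (1 - p) / (2 * Real.sqrt (n * p))
      ≤ ∑ j ∈ Finset.range (n + 1),
          Real.sqrt j * (n.choose j : ℝ) * p ^ j * (1 - p) ^ (n - j) := by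
  set m : ℝ := n * p with hmdef
  have hn0 : (0:ℝ) < n := by exact_mod_cast hn
  have hm : 0 < m := mul_pos hn0 hp0
  set w : ℕ → ℝ := fun j => (n.choose j : ℝ) * p ^ j * (1 - p) ^ (n - j) with hw
  have hwnn : ∀ j, 0 ≤ w j := fun j => by
    have : (0:ℝ) ≤ 1 - p := by linarith
    positivity
  -- the three binomial identities
  have h0 : ∑ j ∈ Finset.range (n + 1), w j = 1 := by
    have := bernsteinPolynomial.sum ℝ n
    apply_fun Polynomial.eval p at this
    simp only [Polynomial.eval_finset_sum, bernsteinPolynomial, Polynomial.eval_mul,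
      Polynomial.eval_pow, Polynomial.eval_sub, Polynomial.eval_one, Polynomial.eval_X,
      Polynomial.eval_natCast, nsmul_eq_mul] at this
    rw [← this]
  have h1 : ∑ j ∈ Finset.range (n + 1), (j : ℝ) * w j = m := by
    have := bernsteinPolynomial.sum_smul ℝ n
    apply_fun Polynomial.eval p at this
    simp only [Polynomial.eval_finset_sum, bernsteinPolynomial, Polynomial.eval_mul,
      Polynomial.eval_pow, Polynomial.eval_sub, Polynomial.eval_one, Polynomial.eval_X,
      Polynomial.eval_natCast, nsmul_eq_mul] at this
    rw [hmdef, ← this]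
  have h2 : ∑ j ∈ Finset.range (n + 1), (m - (j:ℝ)) ^ 2 * w j = m * (1 - p) := by
    have := bernsteinPolynomial.variance ℝ n
    apply_fun Polynomial.eval p at this
    simp only [Polynomial.eval_finset_sum, bernsteinPolynomial, Polynomial.eval_mul,
      Polynomial.eval_pow, Polynomial.eval_sub, Polynomial.eval_one, Polynomial.eval_X,
      Polynomial.eval_natCast, nsmul_eq_mul] at this
    have h' : ∑ j ∈ Finset.range (n + 1), (m - (j:ℝ)) ^ 2 * w j
        = (n:ℝ) * p * (1 - p) := by
      rw [hmdef, ← this]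
    rw [h', hmdef]
  -- pointwise bound times weight
  have hpoint : ∀ j ∈ Finset.range (n + 1),
      (Real.sqrt m + ((j:ℝ) - m) / (2 * Real.sqrt m)
        - (m - (j:ℝ)) ^ 2 / (2 * m * Real.sqrt m)) * w j
      ≤ Real.sqrt (j:ℝ) * (n.choose j : ℝ) * p ^ j * (1 - p) ^ (n - j) := by
    intro j _
    have := sqrt_lower_bound m (j:ℝ) hm (Nat.cast_nonneg j)
    calc (Real.sqrt m + ((j:ℝ) - m) / (2 * Real.sqrt m)
          - (m - (j:ℝ)) ^ 2 / (2 * m * Real.sqrt m)) * w j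
        ≤ Real.sqrt (j:ℝ) * w j := mul_le_mul_of_nonneg_right this (hwnn j)
      _ = Real.sqrt (j:ℝ) * (n.choose j : ℝ) * p ^ j * (1 - p) ^ (n - j) := by
          simp [hw]; ring
  have hsum := Finset.sum_le_sum hpoint
  -- compute the left sum
  have hs0 : 0 < Real.sqrt m := Real.sqrt_pos.mpr hm
  have hleft : ∑ j ∈ Finset.range (n + 1),
      (Real.sqrt m + ((j:ℝ) - m) / (2 * Real.sqrt m)
        - (m - (j:ℝ)) ^ 2 / (2 * m * Real.sqrt m)) * w j
      = Real.sqrt m - (1 - p) / (2 * Real.sqrt m) := by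
    have expand : ∀ j ∈ Finset.range (n + 1),
        (Real.sqrt m + ((j:ℝ) - m) / (2 * Real.sqrt m)
          - (m - (j:ℝ)) ^ 2 / (2 * m * Real.sqrt m)) * w j
        = Real.sqrt m * w j + (1 / (2 * Real.sqrt m)) * ((j:ℝ) * w j)
          - (1 / (2 * Real.sqrt m)) * (m * w j)
          - (1 / (2 * m * Real.sqrt m)) * ((m - (j:ℝ)) ^ 2 * w j) := by
      intro j _; field_simp; ring
    rw [Finset.sum_congr rfl expand]
    simp only [Finset.sum_sub_distrib, Finset.sum_add_distrib, ← Finset.mul_sum]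
    rw [h0, h1, h2]
    have hms : Real.sqrt m * Real.sqrt m = m := Real.mul_self_sqrt hm.le
    field_simp
    nlinarith [hms, hm, hs0]
  rw [← hleft]
  exact hsum
end

section
/- Let B be a real symmetric N×N positive definite matrix with all entries positive, minimal entry b_min. Suppose there exist c > 0, q ∈ ℝ, γ > 0 such that for all 1 ≤ k ≤ K, ∑_{I∈I_k^+} a_I + (b_max/b_min)^{2k} ∑_{I∈I_k^−} a_I ≥ c k^q γ^k / (2k)!, where I_k^± = {I : |I| = 2k, ±a_I ≥ 0}. If K = ∞, further assume γ b_min² < 1. Then μ = ∑_{k=0}^K ∑_{|I|=2k} a_I Haf(B_I)² ≥ a_0 + (c/√π) e^{1/25 − 1/6} · Li_{1/2−q, K}(γ b_min²). -/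
open scoped Classical
open Real

/-- An equivalence `(Σ n, Fin (I n)) ≃ Fin (∑ n, I n)` used to index repeated rows/columns. -/
noncomputable def sigmaFinEquiv {N : ℕ} (I : Fin N → ℕ) :
    (Σ n : Fin N, Fin (I n)) ≃ Fin (∑ n, I n) :=
  Fintype.equivFinOfCardEq (by simp)

/-- The matrix `B_I` obtained from `B` by repeating row/column `n` exactly `I n` times. -/
noncomputable def repMat {N : ℕ} (B : Matrix (Fin N) (Fin N) ℝ) (I : Fin N → ℕ) :
    Matrix (Fin (∑ n, I n)) (Fin (∑ n, I n)) ℝ :=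
  fun a b => B ((sigmaFinEquiv I).symm a).1 ((sigmaFinEquiv I).symm b).1

/-- The truncated polylogarithm `Li_{s,K}(z) = ∑_{1 ≤ k ≤ K} z^k / k^s` (`K ∈ ℕ∞`). -/
noncomputable def polylog (s : ℝ) (K : ℕ∞) (z : ℝ) : ℝ :=
  ∑' k : ℕ, if 1 ≤ k ∧ (k : ℕ∞) ≤ K then z ^ k / (k : ℝ) ^ s else 0

/-!
For `|I| = 2k` every entry of `B_I` lies in `[b_min, b_max]`, so `Haf(B_I)` lies between
`b_min^k (2k)!/(k! 2^k)` and `b_max^k (2k)!/(k! 2^k)`. Bounding `Haf(B_I)²` from below for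
`a_I ≥ 0` and from above for `a_I ≤ 0` turns the hypothesis into
`μ_k ≥ c k^q (γ b_min²)^k (2k)!/(4^k (k!)²)`, and `4^k ≤ 2√k binom(2k, k)` together with
`e^{1/25-1/6} ≤ √π/2` makes this at least the `k`-th term of the polylogarithm. Summing over `k`
gives the claim; when `K = ∞` the polylogarithm converges because `γ b_min² < 1`.
-/

open scoped Nat

theorem exp_sub_le_sqrt_pi_div_two : exp (1 / 25 - 1 / 6) ≤ √π / 2 := by
  have hexp := quadratic_le_exp_of_nonneg (x := 19 / 75) (by norm_num)
  have hsq : exp (1 / 25 - 1 / 6) ^ 2 * exp (19 / 75) = 1 := by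
    rw [← exp_nat_mul, ← exp_add]; norm_num
  rw [le_div_iff₀ two_pos, le_sqrt (by positivity) pi_pos.le]
  nlinarith [pi_gt_d2, exp_pos (1 / 25 - 1 / 6)]

theorem Nat.sixteen_pow_le_four_mul_mul_centralBinom_sq {n : ℕ} (hn : 0 < n) :
    16 ^ n ≤ 4 * n * n.centralBinom ^ 2 := by
  induction n with
  | zero => omega
  | succ n ih =>
    rcases Nat.eq_zero_or_pos n with rfl | hn
    · decide
    have hrec := Nat.succ_mul_centralBinom_succ n
    have ih := ih hn
    refine Nat.le_of_mul_le_mul_left (c := n + 1) ?_ n.succ_pos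
    calc (n + 1) * 16 ^ (n + 1) ≤ 16 * (n + 1) * (4 * n * n.centralBinom ^ 2) := by
          rw [pow_succ]; nlinarith
      _ ≤ 16 * (2 * n + 1) ^ 2 * n.centralBinom ^ 2 := by
          nlinarith [Nat.zero_le (n.centralBinom ^ 2)]
      _ = 4 * ((n + 1) * (n + 1).centralBinom) ^ 2 := by rw [hrec]; ring
      _ = (n + 1) * (4 * (n + 1) * (n + 1).centralBinom ^ 2) := by ring

theorem Nat.factorial_two_mul_eq_centralBinom_mul (k : ℕ) :
    (2 * k)! = k.centralBinom * k ! * k ! := by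
  rw [two_mul, ← Nat.add_choose_mul_factorial_mul_factorial, Nat.centralBinom_eq_two_mul_choose,
    two_mul]

theorem Nat.four_pow_le_two_mul_sqrt_mul_centralBinom {n : ℕ} (hn : 0 < n) :
    (4 : ℝ) ^ n ≤ 2 * √n * n.centralBinom := by
  have h16 : ((4 : ℝ) ^ n) ^ 2 ≤ (2 * √n * n.centralBinom) ^ 2 := by
    rw [mul_pow, mul_pow, sq_sqrt n.cast_nonneg, ← pow_mul, mul_comm, pow_mul]
    exact_mod_cast Nat.sixteen_pow_le_four_mul_mul_centralBinom_sq hn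
  exact le_of_sq_le_sq h16 (by positivity)

theorem exp_div_sqrt_pi_mul_le_factorial_two_mul_div {k : ℕ} (hk : 0 < k) :
    exp (1 / 25 - 1 / 6) / √(π * k) ≤ ((2 * k)! : ℝ) / (2 ^ (2 * k) * (k ! : ℝ) ^ 2) := by
  have hk' : (0 : ℝ) < √k := sqrt_pos.mpr (by exact_mod_cast hk)
  have hC : (0 : ℝ) < k.centralBinom := by exact_mod_cast k.centralBinom_pos
  have hrhs : ((2 * k)! : ℝ) / (2 ^ (2 * k) * (k ! : ℝ) ^ 2) = k.centralBinom / 4 ^ k := by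
    rw [Nat.factorial_two_mul_eq_centralBinom_mul, pow_mul]; push_cast; field_simp; norm_num
  calc exp (1 / 25 - 1 / 6) / √(π * k) ≤ (√π / 2) / (√π * √k) := by
        rw [sqrt_mul pi_pos.le]
        gcongr
        exact exp_sub_le_sqrt_pi_div_two
    _ = 1 / (2 * √k) := by field_simp
    _ ≤ k.centralBinom / 4 ^ k := by
        rw [div_le_div_iff₀ (by positivity) (by positivity)]
        linarith [Nat.four_pow_le_two_mul_sqrt_mul_centralBinom hk]
    _ = _ := hrhs.symm

theorem Finset.sum_filter_nonneg_mul_add_sum_filter_nonpos_mul_le {ι : Type*} (s : Finset ι)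
    (a y : ι → ℝ) {lo hi : ℝ} (hlo : ∀ i ∈ s, lo ≤ y i) (hhi : ∀ i ∈ s, y i ≤ hi) :
    (∑ i ∈ s.filter (fun i => 0 ≤ a i), a i) * lo
        + (∑ i ∈ s.filter (fun i => a i ≤ 0), a i) * hi
      ≤ ∑ i ∈ s, a i * y i := by
  rw [Finset.sum_filter, Finset.sum_filter, Finset.sum_mul, Finset.sum_mul,
    ← Finset.sum_add_distrib]
  refine Finset.sum_le_sum fun i hi_mem => ?_
  have hlo_i := hlo i hi_mem
  have hhi_i := hhi i hi_mem
  split_ifs with hpos hneg hneg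
  · simp [le_antisymm hneg hpos]
  · nlinarith
  · nlinarith
  · exact absurd (not_le.mp hpos).le hneg

theorem hafnian_eq_one_of_size_eq_zero {n : ℕ} (hn : n = 0) (M : Matrix (Fin n) (Fin n) ℝ) :
    hafnian M = 1 := by
  subst hn
  simp [hafnian]

theorem hafnian_mem_Icc {n k : ℕ} (hn : n = 2 * k) (M : Matrix (Fin n) (Fin n) ℝ)
    {lo hi : ℝ} (hlo : 0 ≤ lo) (hlo_le : ∀ i j, lo ≤ M i j) (hle_hi : ∀ i j, M i j ≤ hi) :
    hafnian M ∈
      Set.Icc (lo ^ k * ((2 * k)! / (k ! * 2 ^ k))) (hi ^ k * ((2 * k)! / (k ! * 2 ^ k))) := by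
  subst hn
  suffices hafnian M ∈ Set.Icc (lo ^ (2 * k / 2) * ((2 * k)! / ((2 * k / 2)! * 2 ^ (2 * k / 2))))
      (hi ^ (2 * k / 2) * ((2 * k)! / ((2 * k / 2)! * 2 ^ (2 * k / 2)))) by
    rwa [Nat.mul_div_cancel_left k two_pos] at this
  have hprod (f g : Fin (2 * k / 2) → Fin (2 * k)) :
      lo ^ (2 * k / 2) ≤ ∏ j, M (f j) (g j) ∧ ∏ j, M (f j) (g j) ≤ hi ^ (2 * k / 2) := by
    constructor
    · simpa using Finset.prod_le_prod (s := Finset.univ) (fun _ _ => hlo)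
        (fun j _ => hlo_le (f j) (g j))
    · simpa using Finset.prod_le_prod (s := Finset.univ) (fun _ _ => hlo.trans (hlo_le _ _))
        (fun j _ => hle_hi (f j) (g j))
  have hsum_const (x : ℝ) : x * ((2 * k)! / ((2 * k / 2)! * 2 ^ (2 * k / 2))) =
      1 / ((2 * k / 2)! * 2 ^ (2 * k / 2) : ℝ) * ∑ _σ : Equiv.Perm (Fin (2 * k)), x := by
    simp only [Finset.sum_const, Finset.card_univ, Fintype.card_perm, Fintype.card_fin,
      nsmul_eq_mul]
    ring
  rw [hafnian, if_pos (even_two_mul k), Set.mem_Icc, hsum_const, hsum_const]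
  constructor <;> gcongr with σ
  exacts [(hprod _ _).1, (hprod _ _).2]

theorem sum_antidiagonalTuple_zero_mul_hafnian_sq {N : ℕ} (B : Matrix (Fin N) (Fin N) ℝ)
    (a : (Fin N → ℕ) → ℝ) :
    ∑ I ∈ Finset.Nat.antidiagonalTuple N (2 * 0), a I * hafnian (repMat B I) ^ 2
      = a (fun _ => 0) := by
  rw [Finset.Nat.antidiagonalTuple_zero_right, Finset.sum_singleton,
    hafnian_eq_one_of_size_eq_zero (by simp), one_pow, mul_one]
  rfl

noncomputable def signedWeightSum {N : ℕ} (a : (Fin N → ℕ) → ℝ) (k : ℕ) (r : ℝ) : ℝ :=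
  (∑ I ∈ (Finset.Nat.antidiagonalTuple N (2 * k)).filter (fun I => 0 ≤ a I), a I)
    + r ^ (2 * k) * ∑ I ∈ (Finset.Nat.antidiagonalTuple N (2 * k)).filter (fun I => a I ≤ 0), a I

theorem le_sum_mul_hafnian_repMat_sq {N : ℕ} (B : Matrix (Fin N) (Fin N) ℝ) {bmin bmax : ℝ}
    (hbmin : 0 < bmin) (hbmin_le : ∀ i j, bmin ≤ B i j) (hle_bmax : ∀ i j, B i j ≤ bmax)
    (a : (Fin N → ℕ) → ℝ) (k : ℕ) :
    (bmin ^ k * ((2 * k)! / (k ! * 2 ^ k))) ^ 2 * signedWeightSum a k (bmax / bmin)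
      ≤ ∑ I ∈ Finset.Nat.antidiagonalTuple N (2 * k), a I * hafnian (repMat B I) ^ 2 := by
  set F : ℝ := (2 * k)! / (k ! * 2 ^ k)
  have hhaf (I) (hI : I ∈ Finset.Nat.antidiagonalTuple N (2 * k)) :
      hafnian (repMat B I) ∈ Set.Icc (bmin ^ k * F) (bmax ^ k * F) := by
    have hsize : ∑ n, I n = 2 * k := Finset.Nat.mem_antidiagonalTuple.mp hI
    exact hafnian_mem_Icc hsize (repMat B I) hbmin.le (fun _ _ => hbmin_le _ _)
      (fun _ _ => hle_bmax _ _)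
  have hF : 0 ≤ bmin ^ k * F := by positivity
  have hratio : (bmax / bmin) ^ (2 * k) * (bmin ^ k * F) ^ 2 = (bmax ^ k * F) ^ 2 := by
    rw [div_pow]
    field_simp
    ring
  calc _ = (∑ I ∈ (Finset.Nat.antidiagonalTuple N (2 * k)).filter (fun I => 0 ≤ a I), a I)
          * (bmin ^ k * F) ^ 2
        + (∑ I ∈ (Finset.Nat.antidiagonalTuple N (2 * k)).filter (fun I => a I ≤ 0), a I)
          * (bmax ^ k * F) ^ 2 := by
        rw [signedWeightSum, ← hratio]
        ring
    _ ≤ _ := Finset.sum_filter_nonneg_mul_add_sum_filter_nonpos_mul_le _ _ _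
        (fun I hI => pow_le_pow_left₀ hF (hhaf I hI).1 2)
        (fun I hI => pow_le_pow_left₀ (hF.trans (hhaf I hI).1) (hhaf I hI).2 2)

theorem polylog_term_le_sum_mul_hafnian_sq {N : ℕ} (B : Matrix (Fin N) (Fin N) ℝ)
    {bmin bmax : ℝ} (hbmin : 0 < bmin) (hbmin_le : ∀ i j, bmin ≤ B i j)
    (hle_bmax : ∀ i j, B i j ≤ bmax) (a : (Fin N → ℕ) → ℝ) {c q γ : ℝ} (hc : 0 ≤ c)
    (hγ : 0 ≤ γ) {k : ℕ} (hk : 0 < k)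
    (hbound : c * (k : ℝ) ^ q * γ ^ k / (2 * k)! ≤ signedWeightSum a k (bmax / bmin)) :
    c / √π * exp (1 / 25 - 1 / 6) * ((γ * bmin ^ 2) ^ k / (k : ℝ) ^ (1 / 2 - q))
      ≤ ∑ I ∈ Finset.Nat.antidiagonalTuple N (2 * k), a I * hafnian (repMat B I) ^ 2 := by
  have hk' : (0 : ℝ) < k := by exact_mod_cast hk
  have hrpow : (k : ℝ) ^ (1 / 2 - q) = √k / (k : ℝ) ^ q := by
    rw [rpow_sub hk', sqrt_eq_rpow]
  calc c / √π * exp (1 / 25 - 1 / 6) * ((γ * bmin ^ 2) ^ k / (k : ℝ) ^ (1 / 2 - q))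
      = c * (k : ℝ) ^ q * (γ * bmin ^ 2) ^ k * (exp (1 / 25 - 1 / 6) / √(π * k)) := by
        rw [hrpow, sqrt_mul pi_pos.le]
        field_simp
    _ ≤ c * (k : ℝ) ^ q * (γ * bmin ^ 2) ^ k * ((2 * k)! / (2 ^ (2 * k) * (k ! : ℝ) ^ 2)) := by
        have := exp_div_sqrt_pi_mul_le_factorial_two_mul_div hk
        gcongr
    _ = (bmin ^ k * ((2 * k)! / (k ! * 2 ^ k))) ^ 2 * (c * (k : ℝ) ^ q * γ ^ k / (2 * k)!) := by
        field_simp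
        ring
    _ ≤ _ := by
        grw [hbound]
        exact le_sum_mul_hafnian_repMat_sq B hbmin hbmin_le hle_bmax a k

theorem summable_polylog_terms (s : ℝ) (K : ℕ∞) {z : ℝ} (hz : 0 ≤ z) (hK : K = ⊤ → z < 1) :
    Summable fun k : ℕ => if 1 ≤ k ∧ (k : ℕ∞) ≤ K then z ^ k / (k : ℝ) ^ s else 0 := by
  induction K using ENat.recTopCoe with
  | top =>
    refine Summable.of_norm_bounded_eventually_nat
      (summable_pow_mul_geometric_of_norm_lt_one ⌈-s⌉₊ (r := z) ?_) ?_
    · exact (norm_of_nonneg hz).trans_lt (hK rfl)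
    filter_upwards [Filter.eventually_ge_atTop 1] with k hk
    have hk' : (1 : ℝ) ≤ k := by exact_mod_cast hk
    have hpow : (k : ℝ) ^ (-s) ≤ (k : ℝ) ^ ⌈-s⌉₊ := by
      rw [← rpow_natCast]
      exact rpow_le_rpow_of_exponent_le hk' (Nat.le_ceil _)
    rw [if_pos ⟨hk, le_top⟩, norm_of_nonneg (by positivity), div_eq_mul_inv,
      ← rpow_neg (by positivity), mul_comm]
    exact mul_le_mul_of_nonneg_right hpow (by positivity)
  | coe n =>
    refine summable_of_ne_finset_zero (s := Finset.range (n + 1)) fun k hk => if_neg ?_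
    rintro ⟨-, hkn⟩
    exact hk (Finset.mem_range.mpr (Nat.lt_succ_of_le (by exact_mod_cast hkn)))

theorem gbs_mu_hafsq_lower_bound_general (N : ℕ)
    (B : Matrix (Fin N) (Fin N) ℝ) (hpos : ∀ i j, 0 < B i j)
    (bmin bmax : ℝ)
    (hbmin_lb : ∀ i j, bmin ≤ B i j) (hbmin_mem : ∃ i j, B i j = bmin)
    (hbmax_ub : ∀ i j, B i j ≤ bmax)
    (K : ℕ∞)
    (a : (Fin N → ℕ) → ℝ)
    (c q γ : ℝ) (hc : 0 < c) (hγ : 0 < γ)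
    (hbound : ∀ k : ℕ, 1 ≤ k → (k : ℕ∞) ≤ K →
      c * (k : ℝ) ^ q * γ ^ k / ((2 * k).factorial : ℝ)
        ≤ (∑ I ∈ (Finset.Nat.antidiagonalTuple N (2 * k)).filter (fun I => 0 ≤ a I), a I)
          + (bmax / bmin) ^ (2 * k) *
            ∑ I ∈ (Finset.Nat.antidiagonalTuple N (2 * k)).filter (fun I => a I ≤ 0), a I)
    (hconv : K = ⊤ → γ * bmin ^ 2 < 1)
    (hsum : Summable (fun k : ℕ => if (k : ℕ∞) ≤ K then
      ∑ I ∈ Finset.Nat.antidiagonalTuple N (2 * k), a I * (hafnian (repMat B I)) ^ 2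
      else 0)) :
    a (fun _ => 0) + (c / Real.sqrt π) * Real.exp (1 / 25 - 1 / 6)
        * polylog (1 / 2 - q) K (γ * bmin ^ 2)
      ≤ ∑' k : ℕ, (if (k : ℕ∞) ≤ K then
          ∑ I ∈ Finset.Nat.antidiagonalTuple N (2 * k), a I * (hafnian (repMat B I)) ^ 2
        else 0) := by
  obtain ⟨i, j, hij⟩ := hbmin_mem
  have hbmin : 0 < bmin := hij ▸ hpos i j
  have hpoly := summable_polylog_terms (1 / 2 - q) K (by positivity) hconv
  rw [hsum.tsum_eq_zero_add, polylog, hpoly.tsum_eq_zero_add,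
    if_pos (show ((0 : ℕ) : ℕ∞) ≤ K from bot_le), sum_antidiagonalTuple_zero_mul_hafnian_sq,
    if_neg (show ¬(1 ≤ 0 ∧ ((0 : ℕ) : ℕ∞) ≤ K) by simp), zero_add, ← tsum_mul_left]
  refine add_le_add_right (Summable.tsum_le_tsum (fun k => ?_)
    (((summable_nat_add_iff 1).mpr hpoly).mul_left _) ((summable_nat_add_iff 1).mpr hsum)) _
  by_cases hk : ((k + 1 : ℕ) : ℕ∞) ≤ K
  · rw [if_pos ⟨k.succ_pos, hk⟩, if_pos hk]
    exact polylog_term_le_sum_mul_hafnian_sq B hbmin hbmin_lb hbmax_ub a hc.le hγ.le k.succ_pos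
      (hbound _ k.succ_pos hk)
  · rw [if_neg (fun h => hk h.2), if_neg hk, mul_zero]

/-- If `B` is positive definite with positive entries (min entry `b_min`, max entry `b_max`)
and for all `1 ≤ k ≤ K`,
`∑_{I ∈ I_k^+} a_I + (b_max/b_min)^{2k} ∑_{I ∈ I_k^-} a_I ≥ c k^q γ^k/(2k)!`,
with `γ b_min² < 1` when `K = ∞`, then
`μ = ∑_{k=0}^K ∑_{|I|=2k} a_I Haf(B_I)² ≥ a_0 + (c/√π) e^{1/25 - 1/6} Li_{1/2-q,K}(γ b_min²)`. -/
theorem gbs_mu_hafsq_lower_bound (N : ℕ) (hN : 0 < N)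
    (B : Matrix (Fin N) (Fin N) ℝ) (hB : B.PosDef) (hpos : ∀ i j, 0 < B i j)
    (bmin bmax : ℝ)
    (hbmin_lb : ∀ i j, bmin ≤ B i j) (hbmin_mem : ∃ i j, B i j = bmin)
    (hbmax_ub : ∀ i j, B i j ≤ bmax) (hbmax_mem : ∃ i j, B i j = bmax)
    (K : ℕ∞)
    (a : (Fin N → ℕ) → ℝ)
    (c q γ : ℝ) (hc : 0 < c) (hγ : 0 < γ)
    (hbound : ∀ k : ℕ, 1 ≤ k → (k : ℕ∞) ≤ K →
      c * (k : ℝ) ^ q * γ ^ k / ((2 * k).factorial : ℝ)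
        ≤ (∑ I ∈ (Finset.Nat.antidiagonalTuple N (2 * k)).filter (fun I => 0 ≤ a I), a I)
          + (bmax / bmin) ^ (2 * k) *
            ∑ I ∈ (Finset.Nat.antidiagonalTuple N (2 * k)).filter (fun I => a I ≤ 0), a I)
    (hconv : K = ⊤ → γ * bmin ^ 2 < 1)
    (hsum : Summable (fun k : ℕ => if (k : ℕ∞) ≤ K then
      ∑ I ∈ Finset.Nat.antidiagonalTuple N (2 * k), a I * (hafnian (repMat B I)) ^ 2
      else 0)) :
    a (fun _ => 0) + (c / Real.sqrt π) * Real.exp (1 / 25 - 1 / 6)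
        * polylog (1 / 2 - q) K (γ * bmin ^ 2)
      ≤ ∑' k : ℕ, (if (k : ℕ∞) ≤ K then
          ∑ I ∈ Finset.Nat.antidiagonalTuple N (2 * k), a I * (hafnian (repMat B I)) ^ 2
        else 0) :=
  gbs_mu_hafsq_lower_bound_general N B hpos bmin bmax hbmin_lb hbmin_mem hbmax_ub K a c q γ hc hγ
    hbound hconv hsum
end
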